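/- For all integers t and n with 1 ≤ t and n ≥ t + 1, U_t(n) ≤ U_t(n − 1) + t. -/

import Mathlib

open scoped BigOperators

/-- A lazy transposition on `n` positions, encoded as a triple `(a, b, p)`. -/
abbrev LazyT (n : ℕ) := Fin n × Fin n × ℝ

/-- The triple `(a, b, p)` is a valid lazy transposition: `a ≠ b` and `p ∈ [0,1]`. -/
def LazyT.Valid {n : ℕ} (e : LazyT n) : Prop :=
  e.1 ≠ e.2.1 ∧ 0 ≤ e.2.2 ∧ e.2.2 ≤ 1

/-- A star transposition: its first coordinate is position `1` (index `0` in `Fin n`). -/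
def LazyT.IsStar {n : ℕ} (e : LazyT n) : Prop := (e.1 : ℕ) = 0

/-- `permDist L σ` is the probability that the composition of the independent lazy
transpositions in `L` (applied in order) equals the permutation `σ`. -/
noncomputable def permDist {n : ℕ} : List (LazyT n) → Equiv.Perm (Fin n) → ℝ
  | [], σ => if σ = 1 then 1 else 0
  | e :: L, σ =>
      e.2.2 * permDist L (σ * Equiv.swap e.1 e.2.1) + (1 - e.2.2) * permDist L σ

/-- `L` is a transposition shuffle on `n` points: all entries are valid lazy
transpositions and the composition is uniformly distributed on `Perm (Fin n)`. -/
def IsShuffle {n : ℕ} (L : List (LazyT n)) : Prop :=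
  (∀ e ∈ L, e.Valid) ∧
  ∀ σ : Equiv.Perm (Fin n), permDist L σ = 1 / (n.factorial : ℝ)

/-- `U n` is the minimum length of a transposition shuffle on `n` points. -/
noncomputable def U (n : ℕ) : ℕ :=
  sInf { ℓ : ℕ | ∃ L : List (LazyT n), L.length = ℓ ∧ IsShuffle L }

/-- The probability that, after applying the lazy transpositions in `L`, the `t`
labelled counters starting in positions `1, …, t` end up placed according to the
map `f` (counter `i` in position `f i`). -/
noncomputable def placeProb {n t : ℕ} (ht : t ≤ n) (L : List (LazyT n))
    (f : Fin t → Fin n) : ℝ :=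
  ∑ σ : Equiv.Perm (Fin n),
    if ∀ i : Fin t, σ (Fin.castLE ht i) = f i then permDist L σ else 0

/-- `L` is a `(t,n)`-shuffle: all entries are valid and the final placement of the
`t` counters is uniform over all `n!/(n-t)!` injections. -/
def IsTShuffle {n t : ℕ} (ht : t ≤ n) (L : List (LazyT n)) : Prop :=
  (∀ e ∈ L, e.Valid) ∧
  ∀ f : Fin t → Fin n, Function.Injective f →
    placeProb ht L f = ((n - t).factorial : ℝ) / (n.factorial : ℝ)

/-- `Ut t n` is the minimum length of a `(t,n)`-shuffle. -/
noncomputable def Ut (t n : ℕ) : ℕ :=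
  sInf { ℓ : ℕ | ∃ (ht : t ≤ n) (L : List (LazyT n)), L.length = ℓ ∧ IsTShuffle ht L }

/-- The probability that after applying `L` the set of positions occupied by the
`t` (indistinguishable) counters starting in positions `1, …, t` is exactly `S`. -/
noncomputable def occProb {n t : ℕ} (ht : t ≤ n) (L : List (LazyT n))
    (S : Finset (Fin n)) : ℝ :=
  ∑ σ : Equiv.Perm (Fin n),
    if Finset.image (fun i : Fin t => σ (Fin.castLE ht i)) Finset.univ = S
    then permDist L σ else 0

/-- `L` shuffles `t` indistinguishable counters over `n` positions: all entries are
valid and the occupied set is uniform over all `n.choose t` subsets of size `t`. -/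
def IsIndShuffle {n t : ℕ} (ht : t ≤ n) (L : List (LazyT n)) : Prop :=
  (∀ e ∈ L, e.Valid) ∧
  ∀ S : Finset (Fin n), S.card = t → occProb ht L S = 1 / (n.choose t : ℝ)

/-- `Uhat t n` is the minimum length of a sequence of lazy transpositions shuffling
`t` indistinguishable counters uniformly over `n` positions. -/
noncomputable def Uhat (t n : ℕ) : ℕ :=
  sInf { ℓ : ℕ | ∃ (ht : t ≤ n) (L : List (LazyT n)), L.length = ℓ ∧ IsIndShuffle ht L }

/-- `Ustar n` is the minimum length of a transposition shuffle on `n` points all of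
whose lazy transpositions are star transpositions. -/
noncomputable def Ustar (n : ℕ) : ℕ :=
  sInf { ℓ : ℕ | ∃ L : List (LazyT n), L.length = ℓ ∧ IsShuffle L ∧ ∀ e ∈ L, e.IsStar }

/-- `Utstar t n` is the minimum length of a `(t,n)`-shuffle all of whose lazy
transpositions are star transpositions. -/
noncomputable def Utstar (t n : ℕ) : ℕ :=
  sInf { ℓ : ℕ | ∃ (ht : t ≤ n) (L : List (LazyT n)),
    L.length = ℓ ∧ IsTShuffle ht L ∧ ∀ e ∈ L, e.IsStar }

/-!
Let `L` be an optimal `(t, n - 1)`-shuffle acting on positions `1, …, n - 1`, and precede it by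
the sweep: for `j = 1, …, t`, swap positions `j` and `n` with probability `1 / (n - t + j)`.
After the sweep each counter sits at position `n` with probability `1 / n`, position `n` is
empty with probability `(n - t) / n`, and the counters not at `n` fill positions among
`1, …, t`. Since `L` fixes position `n` and its output is uniform whatever the labelling of
`1, …, t`, a placement putting a counter at `n` has probability `(1 / n) (n - t)! / (n - 1)!`
(marginalising over where `L` takes the empty position) and one avoiding `n` has probability
`((n - t) / n) (n - 1 - t)! / (n - 1)!`; both equal `(n - t)! / n!`. The same construction,
together with the remark that an `(n - 1, n)`-shuffle is an `(n, n)`-shuffle, builds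
`(t, n)`-shuffles for all `t ≤ n` from the empty one, so `U_t(n - 1)` is attained.
-/

open Equiv Finset

section Expectation

variable {N : ℕ}

noncomputable def permExpect (L : List (LazyT N)) (h : Perm (Fin N) → ℝ) : ℝ :=
  ∑ σ, permDist L σ * h σ

@[simp]
lemma permExpect_nil (h : Perm (Fin N) → ℝ) : permExpect [] h = h 1 := by
  simp [permExpect, permDist]

lemma permExpect_cons (e : LazyT N) (L : List (LazyT N)) (h : Perm (Fin N) → ℝ) :
    permExpect (e :: L) h = e.2.2 * permExpect L (fun σ => h (σ * swap e.1 e.2.1)) +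
      (1 - e.2.2) * permExpect L h := by
  have hswap : ∑ σ, permDist L (σ * swap e.1 e.2.1) * h σ =
      ∑ σ, permDist L σ * h (σ * swap e.1 e.2.1) :=
    Fintype.sum_equiv (Equiv.mulRight (swap e.1 e.2.1)) _ _ fun σ => by simp [mul_assoc]
  simp only [permExpect, permDist, add_mul, sum_add_distrib, mul_sum, mul_assoc, ← hswap]

-- `X * S` applies `S` first, so the permutations drawn from `A` act before those from `B`.
lemma permExpect_append (A B : List (LazyT N)) (h : Perm (Fin N) → ℝ) :
    permExpect (A ++ B) h = permExpect A (fun S => permExpect B (fun X => h (X * S))) := by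
  induction A generalizing h with
  | nil => simp
  | cons e A ih => simp only [List.cons_append, permExpect_cons, ih, mul_assoc]

lemma permExpect_congr {H : Subgroup (Perm (Fin N))} {L : List (LazyT N)}
    (hL : ∀ e ∈ L, swap e.1 e.2.1 ∈ H) {h h' : Perm (Fin N) → ℝ}
    (hh : ∀ σ ∈ H, h σ = h' σ) : permExpect L h = permExpect L h' := by
  induction L generalizing h h' with
  | nil => simpa using hh 1 H.one_mem
  | cons e L ih =>
    simp only [List.mem_cons, forall_eq_or_imp] at hL
    rw [permExpect_cons, permExpect_cons, ih hL.2 hh,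
      ih hL.2 fun σ hσ => hh _ (H.mul_mem hσ hL.1)]

lemma permExpect_const_mul (L : List (LazyT N)) (c : ℝ) (h : Perm (Fin N) → ℝ) :
    permExpect L (fun σ => c * h σ) = c * permExpect L h := by
  simp only [permExpect, mul_sum, mul_left_comm]

lemma permExpect_sum {α : Type*} (s : Finset α) (L : List (LazyT N))
    (h : α → Perm (Fin N) → ℝ) :
    permExpect L (fun σ => ∑ a ∈ s, h a σ) = ∑ a ∈ s, permExpect L (h a) := by
  simp only [permExpect, mul_sum]
  exact sum_comm

lemma permExpect_cons_ite (e : LazyT N) (L : List (LazyT N)) (x y : Fin N) :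
    permExpect (e :: L) (fun σ => if σ x = y then 1 else 0) =
      e.2.2 * permExpect L (fun σ => if σ (swap e.1 e.2.1 x) = y then 1 else 0) +
        (1 - e.2.2) * permExpect L (fun σ => if σ x = y then 1 else 0) :=
  permExpect_cons e L _

lemma permExpect_ite_const (L : List (LazyT N)) (p : Perm (Fin N) → Prop)
    [DecidablePred p] (c : ℝ) :
    permExpect L (fun σ => if p σ then c else 0) =
      c * permExpect L (fun σ => if p σ then 1 else 0) := by
  rw [← permExpect_const_mul]
  simp only [mul_ite, mul_one, mul_zero]

end Expectation

lemma sum_ite_mem_range {t n : ℕ} {f : Fin t → Fin n} (hf : Function.Injective f) (c : ℝ) :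
    ∑ v, (if v ∈ Set.range f then 0 else c) = ((n - t : ℕ) : ℝ) * c := by
  rw [sum_ite, sum_const_zero, zero_add, sum_const, nsmul_eq_mul]
  congr
  rw [show (univ.filter fun v => v ∉ Set.range f) = (univ.image f)ᶜ by ext; simp,
    card_compl, card_image_of_injective _ hf, card_univ, Fintype.card_fin, Fintype.card_fin]

section Placement

variable {N r : ℕ}

noncomputable def placeProbFrom (L : List (LazyT N)) (g f : Fin r → Fin N) : ℝ :=
  permExpect L fun σ => if ∀ i, σ (g i) = f i then 1 else 0

lemma placeProb_eq_placeProbFrom {t : ℕ} (ht : t ≤ N) (L : List (LazyT N))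
    (f : Fin t → Fin N) : placeProb ht L f = placeProbFrom L (Fin.castLE ht) f := by
  simp only [placeProb, placeProbFrom, permExpect, mul_ite, mul_one, mul_zero]

lemma placeProbFrom_append (A B : List (LazyT N)) (g f : Fin r → Fin N) :
    placeProbFrom (A ++ B) g f = permExpect A fun S => placeProbFrom B (S ∘ g) f :=
  permExpect_append A B _

lemma placeProbFrom_comp_perm (L : List (LazyT N)) (g f : Fin r → Fin N) (π : Perm (Fin r)) :
    placeProbFrom L (g ∘ π) f = placeProbFrom L g (f ∘ π.symm) := by
  unfold placeProbFrom
  congr! 3 with σ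
  exact π.forall_congr fun i => by simp

lemma placeProbFrom_eq_zero_of_not_injective (L : List (LazyT N)) {g f : Fin r → Fin N}
    (hg : Function.Injective g) (hf : ¬ Function.Injective f) : placeProbFrom L g f = 0 := by
  refine sum_eq_zero fun σ _ => ?_
  dsimp only
  rw [if_neg fun h => hf fun a b hab => hg (σ.injective (by rw [h, h, hab]))]
  exact mul_zero _

lemma sum_placeProbFrom_update (L : List (LazyT N)) (g f : Fin r → Fin N) (a : Fin r) :
    ∑ v, placeProbFrom L g (Function.update f a v) =
      permExpect L fun σ => if ∀ i ≠ a, σ (g i) = f i then 1 else 0 := by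
  simp only [placeProbFrom, ← permExpect_sum]
  congr 1 with σ
  have key (v : Fin N) : (∀ i, σ (g i) = Function.update f a v i) ↔
      σ (g a) = v ∧ ∀ i ≠ a, σ (g i) = f i :=
    Function.forall_update_iff f (fun i w => σ (g i) = w)
  simp only [key, ite_and, sum_ite_eq, mem_univ, if_true]

lemma IsTShuffle.placeProbFrom_eq {t m : ℕ} {ht : t ≤ m} {L : List (LazyT m)}
    (hL : IsTShuffle ht L) {g f : Fin t → Fin m} (hg : Function.Injective g)
    (hgt : ∀ i, (g i : ℕ) < t) (hf : Function.Injective f) :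
    placeProbFrom L g f = ((m - t).factorial : ℝ) / m.factorial := by
  let π : Perm (Fin t) := Equiv.ofBijective (fun i => ⟨g i, hgt i⟩)
    (Finite.injective_iff_bijective.1 fun a b hab => hg (by simpa [Fin.ext_iff] using hab))
  have hgπ : g = Fin.castLE ht ∘ π := rfl
  rw [hgπ, placeProbFrom_comp_perm, ← placeProb_eq_placeProbFrom]
  exact hL.2 _ (hf.comp π.symm.injective)

end Placement

section Embedding

variable {N : ℕ}

def LazyT.castSucc (e : LazyT N) : LazyT (N + 1) := (e.1.castSucc, e.2.1.castSucc, e.2.2)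

lemma LazyT.Valid.castSucc {e : LazyT N} (he : e.Valid) : e.castSucc.Valid :=
  ⟨fun h => he.1 (Fin.castSucc_injective N h), he.2⟩

noncomputable def extendLast : Perm (Fin N) →* Perm (Fin (N + 1)) :=
  Perm.viaEmbeddingHom Fin.castSuccEmb

@[simp]
lemma extendLast_castSucc (τ : Perm (Fin N)) (i : Fin N) :
    extendLast τ i.castSucc = (τ i).castSucc :=
  Perm.viaEmbedding_apply τ Fin.castSuccEmb i

@[simp]
lemma extendLast_last (τ : Perm (Fin N)) : extendLast τ (Fin.last N) = Fin.last N :=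
  Perm.viaEmbedding_apply_of_notMem τ Fin.castSuccEmb _ (by simp)

lemma extendLast_eq_last_iff (τ : Perm (Fin N)) (x : Fin (N + 1)) :
    extendLast τ x = Fin.last N ↔ x = Fin.last N :=
  ⟨fun h => (extendLast τ).injective (h.trans (extendLast_last τ).symm),
    fun h => h ▸ extendLast_last τ⟩

lemma extendLast_swap (a b : Fin N) :
    extendLast (swap a b) = swap a.castSucc b.castSucc := by
  ext x
  induction x using Fin.lastCases with
  | last =>
    rw [extendLast_last, swap_apply_of_ne_of_ne (Fin.castSucc_ne_last a).symm
      (Fin.castSucc_ne_last b).symm]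
  | cast i => rw [extendLast_castSucc, (Fin.castSucc_injective N).swap_apply]

lemma permExpect_map_castSucc (L : List (LazyT N)) (h : Perm (Fin (N + 1)) → ℝ) :
    permExpect (L.map LazyT.castSucc) h = permExpect L fun τ => h (extendLast τ) := by
  induction L generalizing h with
  | nil => simp
  | cons e L ih =>
    simp only [List.map_cons, permExpect_cons, ih, map_mul, extendLast_swap]
    rfl

variable {r : ℕ}

lemma placeProbFrom_map_castSucc (L : List (LazyT N)) (g f : Fin r → Fin N) :
    placeProbFrom (L.map LazyT.castSucc) (Fin.castSucc ∘ g) (Fin.castSucc ∘ f) =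
      placeProbFrom L g f := by
  simp [placeProbFrom, permExpect_map_castSucc]

lemma placeProbFrom_map_castSucc_eq_zero (L : List (LazyT N)) {g f : Fin r → Fin (N + 1)}
    (i : Fin r) (hi : ¬ (g i = Fin.last N ↔ f i = Fin.last N)) :
    placeProbFrom (L.map LazyT.castSucc) g f = 0 := by
  rw [placeProbFrom, permExpect_map_castSucc]
  refine sum_eq_zero fun τ _ => ?_
  dsimp only
  rw [if_neg fun h => hi (by rw [← h i, extendLast_eq_last_iff]), mul_zero]

lemma IsTShuffle.placeProbFrom_map_castSucc {t m : ℕ} {ht : t ≤ m} {L : List (LazyT m)}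
    (hL : IsTShuffle ht L) {g f : Fin t → Fin (m + 1)} (hg : Function.Injective g)
    (hgt : ∀ i, (g i : ℕ) < t) (hf : Function.Injective f) (hfl : ∀ i, f i ≠ Fin.last m) :
    placeProbFrom (L.map LazyT.castSucc) g f = ((m - t).factorial : ℝ) / m.factorial := by
  have hgl i : g i ≠ Fin.last m := Fin.ne_of_val_ne (by have := hgt i; simp; omega)
  set G : Fin t → Fin m := fun i => (g i).castPred (hgl i)
  set F : Fin t → Fin m := fun i => (f i).castPred (hfl i)
  have hg' : g = Fin.castSucc ∘ G := by ext; simp [G]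
  have hf' : f = Fin.castSucc ∘ F := by ext; simp [F]
  rw [hg', hf', _root_.placeProbFrom_map_castSucc]
  rw [hg'] at hg hgt
  rw [hf'] at hf
  exact hL.placeProbFrom_eq hg.of_comp (by simpa using hgt) hf.of_comp

end Embedding

section Sweep

variable {m t : ℕ}

-- Numbering positions from 1 as in the paper, with n = m + 1, step j swaps positions j + 1 and n
-- with probability 1 / (n - t + j + 1).
noncomputable def sweepStep (m t j : ℕ) : LazyT (m + 1) :=
  (Fin.ofNat (m + 1) j, Fin.last m, ((m : ℝ) + 2 - t + j)⁻¹)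

noncomputable def sweep (m t : ℕ) : List (LazyT (m + 1)) :=
  (List.range t).map (sweepStep m t)

lemma length_sweep : (sweep m t).length = t := by simp [sweep]

lemma val_sweepStep_fst (htm : t ≤ m) {j : ℕ} (hj : j < t) : ((sweepStep m t j).1 : ℕ) = j :=
  Nat.mod_eq_of_lt (by omega)

lemma one_le_sweep_denominator (htm : t ≤ m) (j : ℕ) : (1 : ℝ) ≤ m + 2 - t + j := by
  have : (t : ℝ) ≤ m := by exact_mod_cast htm
  have : (0 : ℝ) ≤ j := j.cast_nonneg
  linarith

lemma valid_of_mem_sweep (htm : t ≤ m) {e : LazyT (m + 1)} (he : e ∈ sweep m t) : e.Valid := by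
  obtain ⟨j, hj, rfl⟩ : ∃ j < t, sweepStep m t j = e := by simpa [sweep] using he
  have hD := one_le_sweep_denominator htm j
  refine ⟨fun h => ?_, inv_nonneg.2 (by linarith), inv_le_one_of_one_le₀ hD⟩
  have := congrArg Fin.val h
  simp only [sweepStep, Fin.val_ofNat, Fin.val_last, Nat.mod_eq_of_lt (show j < m + 1 by omega)]
    at this
  omega

def sweepGroup (m t : ℕ) : Subgroup (Perm (Fin (m + 1))) :=
  fixingSubgroup (Perm (Fin (m + 1)))
    ({x | t ≤ (x : ℕ) ∧ x ≠ Fin.last m} : Set (Fin (m + 1)))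

lemma swap_last_mem_sweepGroup {x : Fin (m + 1)} (hx : (x : ℕ) < t) :
    swap x (Fin.last m) ∈ sweepGroup m t :=
  (mem_fixingSubgroup_iff _).2 fun y ⟨hty, hyl⟩ =>
    swap_apply_of_ne_of_ne (Fin.ne_of_val_ne (by omega)) hyl

lemma swap_mem_sweepGroup (htm : t ≤ m) {e : LazyT (m + 1)} (he : e ∈ sweep m t) :
    swap e.1 e.2.1 ∈ sweepGroup m t := by
  obtain ⟨j, hj, rfl⟩ : ∃ j < t, sweepStep m t j = e := by simpa [sweep] using he
  exact swap_last_mem_sweepGroup (by rw [val_sweepStep_fst htm hj]; exact hj)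

lemma val_lt_or_eq_last_of_mem_sweepGroup {σ : Perm (Fin (m + 1))} (hσ : σ ∈ sweepGroup m t)
    {x : Fin (m + 1)} (hx : σ x ≠ x) : (x : ℕ) < t ∨ x = Fin.last m := by
  by_contra h
  rw [not_or, not_lt] at h
  exact hx ((mem_fixingSubgroup_iff _).1 hσ x h)

lemma val_lt_of_mem_sweepGroup (htm : t ≤ m) {σ : Perm (Fin (m + 1))}
    (hσ : σ ∈ sweepGroup m t) (hσl : σ (Fin.last m) = Fin.last m) {x : Fin (m + 1)}
    (hx : (x : ℕ) < t) :
    (σ x : ℕ) < t := by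
  by_cases hfix : σ x = x
  · rwa [hfix]
  refine (val_lt_or_eq_last_of_mem_sweepGroup hσ fun h => hfix (σ.injective h)).resolve_right
    fun h => ?_
  have := congrArg Fin.val (σ.injective (h.trans hσl.symm))
  rw [Fin.val_last] at this
  omega

lemma permExpect_sweep_range' (htm : t ≤ m) (k : ℕ) :
    ∀ j, j + k = t → ∀ x : Fin (m + 1),
      permExpect ((List.range' j k).map (sweepStep m t))
          (fun σ => if σ x = Fin.last m then 1 else 0) =
        if x = Fin.last m then ((m : ℝ) + 1 - t + j) / (m + 1)
        else if j ≤ (x : ℕ) ∧ (x : ℕ) < t then 1 / (m + 1) else 0 := by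
  induction k with
  | zero =>
    rintro j rfl x
    by_cases hx : x = Fin.last m
    · simp [hx]
      field_simp
    · simp [hx]
  | succ k ih =>
    intro j hjk x
    set a : Fin (m + 1) := Fin.ofNat (m + 1) j
    have ha : (a : ℕ) = j := val_sweepStep_fst htm (by omega)
    have hal : a ≠ Fin.last m := fun h => by simp [h] at ha; omega
    rw [List.range'_succ, List.map_cons,
      show sweepStep m t j = (a, Fin.last m, ((m : ℝ) + 2 - t + j)⁻¹) from rfl,
      permExpect_cons_ite, ih (j + 1) (by omega), ih (j + 1) (by omega)]
    dsimp only
    have hD : (m : ℝ) + 2 - t + j ≠ 0 :=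
      (zero_lt_one.trans_le (one_le_sweep_denominator htm j)).ne'
    by_cases hxl : x = Fin.last m
    · subst hxl
      rw [swap_apply_right, if_neg hal, if_neg (by omega), if_pos rfl, if_pos rfl]
      field_simp
      push_cast
      ring
    by_cases hxa : x = a
    · subst hxa
      rw [swap_apply_left, if_pos rfl, if_neg hal, if_neg (by omega), if_neg hal,
        if_pos (by omega)]
      field_simp
      push_cast
      ring
    · rw [swap_apply_of_ne_of_ne hxa hxl, if_neg hxl, if_neg hxl]
      have hxj : (x : ℕ) ≠ j := fun h => hxa (Fin.ext (h.trans ha.symm))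
      have hcond : j + 1 ≤ (x : ℕ) ∧ (x : ℕ) < t ↔ j ≤ (x : ℕ) ∧ (x : ℕ) < t := by
        omega
      rw [if_congr hcond rfl rfl]
      ring

lemma permExpect_sweep (htm : t ≤ m) (x : Fin (m + 1)) :
    permExpect (sweep m t) (fun σ => if σ x = Fin.last m then 1 else 0) =
      if x = Fin.last m then ((m : ℝ) + 1 - t) / (m + 1)
      else if (x : ℕ) < t then 1 / (m + 1) else 0 := by
  simpa [sweep, List.range_eq_range'] using permExpect_sweep_range' htm t 0 (zero_add t) x

end Sweep

section SweepThenShuffle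

variable {m t : ℕ} {htm : t ≤ m} {L : List (LazyT m)}

lemma IsTShuffle.placeProbFrom_update_of_eq_last (hL : IsTShuffle htm L)
    {g f : Fin t → Fin (m + 1)} (hg : Function.Injective g) (hgt : ∀ i, (g i : ℕ) < t)
    (hf : Function.Injective f) {a : Fin t} (hfa : f a = Fin.last m) (v : Fin (m + 1)) :
    placeProbFrom (L.map LazyT.castSucc) g (Function.update f a v) =
      if v ∈ Set.range f then 0 else ((m - t).factorial : ℝ) / m.factorial := by
  split_ifs with hv
  · obtain ⟨i, rfl⟩ := hv
    by_cases hia : i = a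
    · subst hia
      rw [Function.update_eq_self]
      have hgl : g i ≠ Fin.last m := Fin.ne_of_val_ne (by have := hgt i; simp; omega)
      exact placeProbFrom_map_castSucc_eq_zero L i (by simp [hfa, hgl])
    · refine placeProbFrom_eq_zero_of_not_injective _ hg fun hinj => hia (hinj ?_)
      simp [Function.update_of_ne hia]
  have hva i : f i ≠ v := fun h => hv ⟨i, h⟩
  refine hL.placeProbFrom_map_castSucc hg hgt (fun x y hxy => ?_) fun i => ?_
  · by_cases hx : x = a <;> by_cases hy : y = a
    · rw [hx, hy]
    · simp [hx, Function.update_of_ne hy, (hva y).symm] at hxy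
    · simp [hy, Function.update_of_ne hx, hva x] at hxy
    · simpa [Function.update_of_ne hx, Function.update_of_ne hy, hf.eq_iff] using hxy
  · by_cases hi : i = a
    · rw [hi, Function.update_self, ← hfa]
      exact (hva a).symm
    · rw [Function.update_of_ne hi, ← hfa]
      exact hf.ne hi

lemma IsTShuffle.placeProbFrom_of_sweepGroup_of_eq_last (hL : IsTShuffle htm L)
    (htn : t ≤ m + 1) {S : Perm (Fin (m + 1))} (hS : S ∈ sweepGroup m t)
    {f : Fin t → Fin (m + 1)} (hf : Function.Injective f) {a : Fin t} (hfa : f a = Fin.last m) :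
    placeProbFrom (L.map LazyT.castSucc) (S ∘ Fin.castLE htn) f =
      if S (Fin.castLE htn a) = Fin.last m then ((m + 1 - t).factorial : ℝ) / m.factorial
      else 0 := by
  have hcast i : Fin.castLE htn i ≠ Fin.last m := Fin.ne_of_val_ne (by simp; omega)
  split_ifs with hSa
  swap
  · exact placeProbFrom_map_castSucc_eq_zero L a (by simp [hSa, hfa])
  -- The sweep left counter `a` at `last`, where `L` keeps it. Exchanging the roles of counter `a`
  -- and the hole gives `S'`; marginalising over where `L` takes the hole leaves a `t`-counter
  -- event.
  set S' := S * swap (Fin.castLE htn a) (Fin.last m)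
  have hS' : S' ∈ sweepGroup m t :=
    (sweepGroup m t).mul_mem hS (swap_last_mem_sweepGroup (by simp))
  have hS'l : S' (Fin.last m) = Fin.last m := by simp [S', hSa]
  set g := S' ∘ Fin.castLE htn
  have hg : Function.Injective g := S'.injective.comp (Fin.castLE_injective htn)
  have hgt i : (g i : ℕ) < t := val_lt_of_mem_sweepGroup htm hS' hS'l (by simp)
  have hgS i (hi : i ≠ a) : g i = S (Fin.castLE htn i) := by
    simp [g, S', swap_apply_of_ne_of_ne ((Fin.castLE_injective htn).ne hi) (hcast i)]
  calc placeProbFrom (L.map LazyT.castSucc) (S ∘ Fin.castLE htn) f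
      = permExpect (L.map LazyT.castSucc)
          (fun X => if ∀ i ≠ a, X (g i) = f i then 1 else 0) := by
        simp only [placeProbFrom, permExpect_map_castSucc]
        congr 1 with τ
        refine if_congr ⟨fun h i hi => hgS i hi ▸ h i, fun h i => ?_⟩ rfl rfl
        by_cases hi : i = a
        · simp [hi, hSa, hfa]
        · simpa [hgS i hi] using h i hi
    _ = ∑ v, placeProbFrom (L.map LazyT.castSucc) g (Function.update f a v) := by
        rw [sum_placeProbFrom_update]
    _ = ∑ v, if v ∈ Set.range f then 0 else ((m - t).factorial : ℝ) / m.factorial :=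
        sum_congr rfl fun v _ => hL.placeProbFrom_update_of_eq_last hg hgt hf hfa v
    _ = ((m + 1 - t).factorial : ℝ) / m.factorial := by
        rw [sum_ite_mem_range hf, show m + 1 - t = m - t + 1 by omega, Nat.factorial_succ]
        push_cast
        ring

lemma IsTShuffle.placeProbFrom_of_sweepGroup_of_ne_last (hL : IsTShuffle htm L)
    (htn : t ≤ m + 1) {S : Perm (Fin (m + 1))} (hS : S ∈ sweepGroup m t)
    {f : Fin t → Fin (m + 1)} (hf : Function.Injective f) (hfl : ∀ i, f i ≠ Fin.last m) :
    placeProbFrom (L.map LazyT.castSucc) (S ∘ Fin.castLE htn) f =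
      if S (Fin.last m) = Fin.last m then ((m - t).factorial : ℝ) / m.factorial else 0 := by
  split_ifs with hSl
  · exact hL.placeProbFrom_map_castSucc (S.injective.comp (Fin.castLE_injective htn))
      (fun i => val_lt_of_mem_sweepGroup htm hS hSl (by simp)) hf hfl
  · set y := S.symm (Fin.last m)
    have hy : S y = Fin.last m := S.apply_symm_apply _
    have hyl : y ≠ Fin.last m := fun h => hSl (h ▸ hy)
    have hyt : (y : ℕ) < t :=
      (val_lt_or_eq_last_of_mem_sweepGroup hS (hy.trans_ne hyl.symm)).resolve_right hyl
    refine placeProbFrom_map_castSucc_eq_zero L ⟨y, hyt⟩ ?_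
    simp [show Fin.castLE htn ⟨y, hyt⟩ = y from rfl, hy, hfl]

theorem IsTShuffle.sweep_append (hL : IsTShuffle htm L) (htn : t ≤ m + 1) :
    IsTShuffle htn (sweep m t ++ L.map LazyT.castSucc) := by
  refine ⟨fun e he => ?_, fun f hf => ?_⟩
  · rcases List.mem_append.1 he with he | he
    · exact valid_of_mem_sweep htm he
    · obtain ⟨e', he', rfl⟩ := List.mem_map.1 he
      exact (hL.1 e' he').castSucc
  have hsweep := fun e (he : e ∈ sweep m t) => swap_mem_sweepGroup htm he
  have hfact : ((m + 1).factorial : ℝ) = (m + 1) * m.factorial := by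
    push_cast [Nat.factorial_succ]; ring
  rw [placeProb_eq_placeProbFrom, placeProbFrom_append]
  by_cases hit : ∃ a, f a = Fin.last m
  · obtain ⟨a, ha⟩ := hit
    rw [permExpect_congr hsweep fun S hS =>
        hL.placeProbFrom_of_sweepGroup_of_eq_last htn hS hf ha, permExpect_ite_const,
      permExpect_sweep htm, if_neg (Fin.ne_of_val_ne (by simp; omega)), if_pos (by simp), hfact]
    field_simp
  · rw [not_exists] at hit
    rw [permExpect_congr hsweep fun S hS =>
        hL.placeProbFrom_of_sweepGroup_of_ne_last htn hS hf hit, permExpect_ite_const,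
      permExpect_sweep htm, if_pos rfl, hfact, show m + 1 - t = m - t + 1 by omega,
      Nat.factorial_succ]
    push_cast [Nat.cast_sub htm]
    field_simp
    ring

end SweepThenShuffle

lemma IsTShuffle.self_of_pred {m : ℕ} {h : m ≤ m + 1} {L : List (LazyT (m + 1))}
    (hL : IsTShuffle h L) : IsTShuffle le_rfl L := by
  refine ⟨hL.1, fun f hf => ?_⟩
  have key (σ : Perm (Fin (m + 1))) : (∀ i, σ (Fin.castLE le_rfl i) = f i) ↔
      ∀ i : Fin m, σ (Fin.castLE h i) = f i.castSucc := by
    refine ⟨fun hσ i => hσ i.castSucc, fun hσ i => ?_⟩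
    induction i using Fin.lastCases with
    | cast i => exact hσ i
    | last =>
      obtain ⟨j, hj⟩ := σ.surjective (f (Fin.last m))
      rcases Fin.eq_castSucc_or_eq_last j with ⟨k, rfl⟩ | rfl
      · exact absurd (hf (hj.symm.trans (hσ k))) (Fin.castSucc_ne_last k).symm
      · exact hj
  have hm := hL.2 (f ∘ Fin.castSucc) (hf.comp (Fin.castSucc_injective m))
  simp only [placeProb, Function.comp_apply] at hm
  simp only [placeProb, key, hm, Nat.add_sub_cancel_left, Nat.sub_self, Nat.factorial_zero,
    Nat.factorial_one]

lemma exists_isTShuffle (m : ℕ) :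
    ∀ {t : ℕ} (h : t ≤ m), ∃ L : List (LazyT m), IsTShuffle h L := by
  induction m with
  | zero =>
    intro t h
    obtain rfl : t = 0 := by omega
    exact ⟨[], by simp, fun f _ => by simp [placeProb_eq_placeProbFrom, placeProbFrom]⟩
  | succ m ih =>
    intro t h
    rcases (Nat.le_succ_iff.1 h) with htm | rfl
    · obtain ⟨L, hL⟩ := ih htm
      exact ⟨_, hL.sweep_append h⟩
    · obtain ⟨L, hL⟩ := ih le_rfl
      exact ⟨_, (hL.sweep_append (Nat.le_succ m)).self_of_pred⟩

lemma Ut_le_length {t n : ℕ} {h : t ≤ n} {L : List (LazyT n)} (hL : IsTShuffle h L) :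
    Ut t n ≤ L.length :=
  Nat.sInf_le ⟨h, L, rfl, hL⟩

lemma exists_isTShuffle_length_eq_Ut {t n : ℕ} (h : t ≤ n) :
    ∃ L : List (LazyT n), L.length = Ut t n ∧ IsTShuffle h L := by
  obtain ⟨L, hL⟩ := exists_isTShuffle n h
  obtain ⟨_, L', hlen, hL'⟩ := Nat.sInf_mem (⟨_, h, L, rfl, hL⟩ : {ℓ : ℕ |
    ∃ (ht : t ≤ n) (L : List (LazyT n)), L.length = ℓ ∧ IsTShuffle ht L}.Nonempty)
  exact ⟨L', hlen, hL'⟩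

theorem sweeping_general (t n : ℕ) (hn : t + 1 ≤ n) :
    Ut t n ≤ Ut t (n - 1) + t := by
  obtain ⟨m, rfl⟩ : ∃ m, n = m + 1 := ⟨n - 1, by omega⟩
  obtain ⟨L, hlen, hL⟩ := exists_isTShuffle_length_eq_Ut (show t ≤ m by omega)
  calc Ut t (m + 1) ≤ (sweep m t ++ L.map LazyT.castSucc).length :=
        Ut_le_length (hL.sweep_append (by omega))
    _ = Ut t (m + 1 - 1) + t := by simp [length_sweep, hlen, add_comm]

theorem sweeping (t n : ℕ) (ht : 1 ≤ t) (hn : t + 1 ≤ n) :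
    Ut t n ≤ Ut t (n - 1) + t :=
  sweeping_general t n hn
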